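/- arXiv:2603.15211 — 5 statements merged into one kernel-verified Lean document; each statement's English description precedes it below -/
import Mathlib

section
/- Let κ ∈ ℝ and let a, v, g : ℝ → 𝒮(ℝ;ℝ) be continuously differentiable curves in the Schwartz space such that for every t: (d/dt)a(t) = ∂_y v(t) and (d/dt)v(t) − ∂_y a(t) − ∂_y² v(t) = g(t). Define ℒ²(t) := ∫_ℝ (a(t)² + v(t)²) dy − 2κ ∫_ℝ v(t) ∂_y a(t) dy. Then for every t the function ℒ² is differentiable at t and (1/2)(d/dt)ℒ²(t) + κ ∫_ℝ (∂_y a(t))² dy + (1−κ) ∫_ℝ (∂_y v(t))² dy = −κ ∫_ℝ ∂_y² v(t) · ∂_y a(t) dy − κ ∫_ℝ g(t) · ∂_y a(t) dy + ∫_ℝ g(t) · v(t) dy. -/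
/-!
Differentiating under the integral sign is legitimate because a continuous curve in `𝓢(ℝ, ℝ)`
has locally bounded seminorms, so every product of two such curves is dominated by
`C (1 + y²)⁻¹` locally uniformly in `t`. This gives `d/dt ℒ²` in terms of `a_t = v_y`,
`v_t = a_y + v_yy + g` and `(a_y)_t = v_yy`; the last identity comes from differentiating
`a(s) = a(t) + ∫_t^s v_y` in `y` under the integral. Integration by parts,
`∫ v_y a + ∫ a_y v = 0` and `∫ v_yy v + ∫ v_y v_y = 0`, then turns `d/dt ℒ²` into the claimed
expression.
-/

open MeasureTheory Filter Metric Set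

namespace SchwartzMap

instance instContinuousEvalConst {E F : Type*} [NormedAddCommGroup E] [NormedSpace ℝ E]
    [NormedAddCommGroup F] [NormedSpace ℝ F] : ContinuousEvalConst 𝓢(E, F) E F where
  continuous_eval_const y :=
    (BoundedContinuousFunction.evalCLM ℝ y).continuous.comp
      (toBoundedContinuousFunctionCLM ℝ E F).continuous

theorem coe_derivCLM (f : 𝓢(ℝ, ℝ)) : ⇑(derivCLM ℝ ℝ f) = deriv f := rfl

theorem one_add_sq_mul_abs_le (f : 𝓢(ℝ, ℝ)) (y : ℝ) :
    (1 + y ^ 2) * |f y| ≤ SchwartzMap.seminorm ℝ 0 0 f + SchwartzMap.seminorm ℝ 2 0 f := by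
  have h₀ := norm_le_seminorm ℝ f y
  have h₂ := norm_pow_mul_le_seminorm ℝ f 2 y
  rw [Real.norm_eq_abs, sq_abs] at h₂
  rw [Real.norm_eq_abs] at h₀ h₂
  linarith

section CompactBounds

variable {X : Type*} [TopologicalSpace X] {K : Set X}

theorem _root_.IsCompact.exists_one_add_sq_mul_abs_le (hK : IsCompact K) {c : X → 𝓢(ℝ, ℝ)}
    (hc : Continuous c) : ∃ C, ∀ t ∈ K, ∀ y, (1 + y ^ 2) * |c t y| ≤ C := by
  have hsem (k : ℕ) : Continuous fun t => SchwartzMap.seminorm ℝ k 0 (c t) :=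
    ((schwartz_withSeminorms ℝ ℝ ℝ).continuous_seminorm (k, 0)).comp hc
  obtain ⟨C, hC⟩ := hK.bddAbove_image ((hsem 0).add (hsem 2)).continuousOn
  exact ⟨C, fun t ht y => (one_add_sq_mul_abs_le (c t) y).trans (hC (mem_image_of_mem _ ht))⟩

theorem _root_.IsCompact.exists_abs_le (hK : IsCompact K) {c : X → 𝓢(ℝ, ℝ)}
    (hc : Continuous c) : ∃ C, ∀ t ∈ K, ∀ y, |c t y| ≤ C := by
  obtain ⟨C, hC⟩ := hK.exists_one_add_sq_mul_abs_le hc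
  exact ⟨C, fun t ht y => (le_mul_of_one_le_left (abs_nonneg _)
    (le_add_of_nonneg_right (sq_nonneg y))).trans (hC t ht y)⟩

theorem _root_.IsCompact.exists_abs_mul_le (hK : IsCompact K) {c₁ c₂ : X → 𝓢(ℝ, ℝ)}
    (hc₁ : Continuous c₁) (hc₂ : Continuous c₂) :
    ∃ C, ∀ t ∈ K, ∀ y, |c₁ t y * c₂ t y| ≤ C * (1 + y ^ 2)⁻¹ := by
  obtain ⟨C₁, hC₁⟩ := hK.exists_abs_le hc₁
  obtain ⟨C₂, hC₂⟩ := hK.exists_one_add_sq_mul_abs_le hc₂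
  refine ⟨C₁ * C₂, fun t ht y => ?_⟩
  have h₁ := hC₁ t ht y
  have h₂ : |c₂ t y| ≤ C₂ * (1 + y ^ 2)⁻¹ := by
    rw [← div_eq_mul_inv, le_div_iff₀ (by positivity), mul_comm]
    exact hC₂ t ht y
  rw [abs_mul, mul_assoc]
  exact mul_le_mul h₁ h₂ (abs_nonneg _) ((abs_nonneg _).trans h₁)

end CompactBounds

theorem integrable_mul (f g : 𝓢(ℝ, ℝ)) : Integrable fun y => f y * g y :=
  (pairing (ContinuousLinearMap.mul ℝ ℝ) f g).integrable

theorem integral_add_mul (f₁ f₂ g : 𝓢(ℝ, ℝ)) :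
    ∫ y, (f₁ + f₂) y * g y = (∫ y, f₁ y * g y) + ∫ y, f₂ y * g y := by
  simp only [add_apply, add_mul]
  exact integral_add (integrable_mul _ _) (integrable_mul _ _)

theorem integral_derivCLM_mul_add_integral_derivCLM_mul (f g : 𝓢(ℝ, ℝ)) :
    (∫ y, derivCLM ℝ ℝ f y * g y) + ∫ y, derivCLM ℝ ℝ g y * f y = 0 := by
  rw [integral_congr_ae (ae_of_all _ fun y => mul_comm (derivCLM ℝ ℝ f y) (g y))]
  exact add_eq_zero_iff_eq_neg.mpr (integral_mul_deriv_eq_neg_deriv_mul g f)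

/- The second term is written `g' * f` so that both terms have the derivative on the left, the
shape of `integral_derivCLM_mul_add_integral_derivCLM_mul`. -/
theorem hasDerivAt_integral_mul {f g f' g' : ℝ → 𝓢(ℝ, ℝ)} (hf : Continuous f)
    (hg : Continuous g) (hf' : Continuous f') (hg' : Continuous g')
    (hff' : ∀ t y, HasDerivAt (fun s => f s y) (f' t y) t)
    (hgg' : ∀ t y, HasDerivAt (fun s => g s y) (g' t y) t) (t₀ : ℝ) :
    HasDerivAt (fun t => ∫ y, f t y * g t y)
      ((∫ y, f' t₀ y * g t₀ y) + ∫ y, g' t₀ y * f t₀ y) t₀ := by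
  obtain ⟨C₁, hC₁⟩ := (isCompact_closedBall t₀ 1).exists_abs_mul_le hf' hg
  obtain ⟨C₂, hC₂⟩ := (isCompact_closedBall t₀ 1).exists_abs_mul_le hg' hf
  have hbound : ∀ y, ∀ t ∈ closedBall t₀ 1,
      ‖f' t y * g t y + g' t y * f t y‖ ≤ (C₁ + C₂) * (1 + y ^ 2)⁻¹ := fun y t ht => by
    rw [add_mul]
    exact (abs_add_le _ _).trans (add_le_add (hC₁ t ht y) (hC₂ t ht y))
  rw [← integral_add (integrable_mul _ _) (integrable_mul _ _)]
  exact (hasDerivAt_integral_of_dominated_loc_of_deriv_le (closedBall_mem_nhds t₀ one_pos)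
    (Eventually.of_forall fun t => (integrable_mul (f t) (g t)).aestronglyMeasurable)
    (integrable_mul _ _) ((integrable_mul _ _).add (integrable_mul _ _)).aestronglyMeasurable
    (ae_of_all _ hbound) (integrable_inv_one_add_sq.const_mul _)
    (ae_of_all _ fun y t _ => ((hff' t y).mul (hgg' t y)).congr_deriv (by ring))).2

theorem hasDerivAt_intervalIntegral_apply {w : ℝ → 𝓢(ℝ, ℝ)} (hw : Continuous w) (a b y : ℝ) :
    HasDerivAt (fun z => ∫ τ in a..b, w τ z) (∫ τ in a..b, deriv (w τ) y) y := by
  have hw' : Continuous fun τ => derivCLM ℝ ℝ (w τ) := (derivCLM ℝ ℝ).continuous.comp hw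
  obtain ⟨C, hC⟩ := isCompact_uIcc.exists_abs_le hw'
  exact (intervalIntegral.hasDerivAt_integral_of_dominated_loc_of_deriv_le (bound := fun _ => C)
    univ_mem (Eventually.of_forall fun z => (hw.eval_const z).aestronglyMeasurable)
    ((hw.eval_const y).intervalIntegrable a b) (hw'.eval_const y).aestronglyMeasurable
    (ae_of_all _ fun τ hτ z _ => hC τ (uIoc_subset_uIcc hτ) z) intervalIntegrable_const
    (ae_of_all _ fun τ _ z _ => (w τ).hasDerivAt z)).2

theorem hasDerivAt_deriv_apply {f w : ℝ → 𝓢(ℝ, ℝ)} (hw : Continuous w)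
    (hf : ∀ t y, HasDerivAt (fun s => f s y) (w t y) t) (t y : ℝ) :
    HasDerivAt (fun s => deriv (f s) y) (deriv (w t) y) t := by
  have hrepr (s : ℝ) : ⇑(f s) = fun z => f t z + ∫ τ in t..s, w τ z := funext fun z => by
    rw [intervalIntegral.integral_eq_sub_of_hasDerivAt (fun τ _ => hf τ z)
      ((hw.eval_const z).intervalIntegrable t s)]
    ring
  have hderiv (s : ℝ) : deriv (f s) y = deriv (f t) y + ∫ τ in t..s, deriv (w τ) y := by
    rw [hrepr s]
    exact (((f t).hasDerivAt y).add (hasDerivAt_intervalIntegral_apply hw t s y)).deriv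
  have hcont : Continuous fun τ => deriv (w τ) y :=
    ((derivCLM ℝ ℝ).continuous.comp hw).eval_const y
  exact ((hcont.integral_hasStrictDerivAt t t).hasDerivAt.const_add _).congr_of_eventuallyEq
    (Eventually.of_forall hderiv)

end SchwartzMap

open SchwartzMap

/-- evolution of the low-frequency energy functional
ℒ² = ‖(a,v)‖²_{L²} − 2κ∫ v a_y along solutions of the linearized system
a_t = v_y, v_t − a_y − v_yy = g (curves of Schwartz functions). -/
theorem energy_functional_evolution
    (κ : ℝ) (a v g : ℝ → SchwartzMap ℝ ℝ)
    (hca : Continuous a) (hcv : Continuous v) (hcg : Continuous g)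
    (hta : ∀ t y : ℝ, HasDerivAt (fun s => a s y) (deriv (fun z => v t z) y) t)
    (htv : ∀ t y : ℝ, HasDerivAt (fun s => v s y)
      (deriv (fun z => a t z) y + deriv (deriv (fun z => v t z)) y + g t y) t)
    (L2 : ℝ → ℝ)
    (hL2 : ∀ t : ℝ, L2 t = (∫ y : ℝ, (a t y ^ 2 + v t y ^ 2))
      - 2 * κ * ∫ y : ℝ, v t y * deriv (fun z => a t z) y) :
    ∀ t : ℝ, DifferentiableAt ℝ L2 t ∧
      (1/2) * deriv L2 t + κ * (∫ y : ℝ, (deriv (fun z => a t z) y) ^ 2)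
        + (1 - κ) * (∫ y : ℝ, (deriv (fun z => v t z) y) ^ 2)
      = -κ * (∫ y : ℝ, deriv (deriv (fun z => v t z)) y * deriv (fun z => a t z) y)
        - κ * (∫ y : ℝ, g t y * deriv (fun z => a t z) y)
        + ∫ y : ℝ, g t y * v t y := by
  eta_reduce at hta htv hL2 ⊢
  simp only [← coe_derivCLM] at hta htv hL2 ⊢
  intro t
  have hcda : Continuous fun t => derivCLM ℝ ℝ (a t) := (derivCLM ℝ ℝ).continuous.comp hca
  have hcdv : Continuous fun t => derivCLM ℝ ℝ (v t) := (derivCLM ℝ ℝ).continuous.comp hcv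
  have hcddv : Continuous fun t => derivCLM ℝ ℝ (derivCLM ℝ ℝ (v t)) :=
    (derivCLM ℝ ℝ).continuous.comp hcdv
  have hcvt : Continuous fun t => derivCLM ℝ ℝ (a t) + derivCLM ℝ ℝ (derivCLM ℝ ℝ (v t)) + g t :=
    (hcda.add hcddv).add hcg
  have htda := hasDerivAt_deriv_apply hcdv hta
  have hL := ((hasDerivAt_integral_mul hca hca hcdv hcdv hta hta t).add
    (hasDerivAt_integral_mul hcv hcv hcvt hcvt htv htv t)).sub
    ((hasDerivAt_integral_mul hcv hcda hcvt hcddv htv htda t).const_mul (2 * κ))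
  replace hL := hL.congr_of_eventuallyEq (f₁ := L2) (Eventually.of_forall fun t => by
    simp only [hL2, Pi.add_apply, Pi.sub_apply, sq]
    rw [integral_add (integrable_mul _ _) (integrable_mul _ _)])
  refine ⟨hL.differentiableAt, ?_⟩
  rw [hL.deriv]
  simp only [integral_add_mul, sq]
  linear_combination integral_derivCLM_mul_add_integral_derivCLM_mul (v t) (a t)
    + (1 - κ) * integral_derivCLM_mul_add_integral_derivCLM_mul (derivCLM ℝ ℝ (v t)) (v t)
end

section
/- Let v, a ∈ 𝒮(ℝ;ℝ) be Schwartz functions and let R > 0. Assume that the Fourier transform of v is supported in the set {ξ ∈ ℝ : |ξ| ≤ R}. Then |∫_ℝ v''(y) a'(y) dy| ≤ (1/2)‖a'‖²_{L²} + 2π²R² ‖v'‖²_{L²}. -/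
/-!
On the Fourier side differentiation is multiplication by `2πiξ`, so when `𝓕 v` vanishes for
`|ξ| > R`, Plancherel gives Bernstein's inequality `‖v''‖₂ ≤ 2πR ‖v'‖₂`. Young's inequality
`|xy| ≤ x²/2 + y²/2` applied pointwise to `v'' a'` then yields the bound.
-/

open MeasureTheory Complex Real
open scoped FourierTransform

theorem abs_integral_mul_le_half_integral_sq_add {α : Type*} [MeasurableSpace α] {μ : Measure α}
    {f g : α → ℝ} (hf : MemLp f 2 μ) (hg : MemLp g 2 μ) :
    |∫ x, f x * g x ∂μ| ≤ (1 / 2) * ∫ x, f x ^ 2 ∂μ + (1 / 2) * ∫ x, g x ^ 2 ∂μ := by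
  have hf2 := hf.integrable_sq.const_mul (1 / 2)
  have hg2 := hg.integrable_sq.const_mul (1 / 2)
  calc |∫ x, f x * g x ∂μ| ≤ ∫ x, |f x * g x| ∂μ := abs_integral_le_integral_abs
    _ ≤ ∫ x, (1 / 2) * f x ^ 2 + (1 / 2) * g x ^ 2 ∂μ := by
      refine integral_mono_of_nonneg (ae_of_all _ fun _ => abs_nonneg _) (hf2.add hg2)
        (ae_of_all _ fun x => ?_)
      have := two_mul_le_add_sq |f x| |g x|
      rw [sq_abs, sq_abs] at this
      simp only [abs_mul]
      linarith
    _ = (1 / 2) * ∫ x, f x ^ 2 ∂μ + (1 / 2) * ∫ x, g x ^ 2 ∂μ := by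
      rw [integral_add hf2 hg2, integral_const_mul, integral_const_mul]

namespace SchwartzMap

theorem fourier_deriv_apply {E : Type*} [NormedAddCommGroup E] [NormedSpace ℂ E]
    [CompleteSpace E] (f : 𝓢(ℝ, E)) (ξ : ℝ) :
    𝓕 (deriv f) ξ = (2 * π * I * ξ) • 𝓕 (f : ℝ → E) ξ := by
  rw [Real.fourier_deriv f.integrable f.differentiable (derivCLM ℝ E f).integrable]

theorem deriv_postcompCLM {F G : Type*} [NormedAddCommGroup F] [NormedSpace ℝ F]
    [NormedAddCommGroup G] [NormedSpace ℝ G] (L : F →L[ℝ] G) (f : 𝓢(ℝ, F)) :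
    deriv (f.postcompCLM L) = fun x => L (deriv f x) := funext fun x =>
  (L.hasFDerivAt.comp_hasDerivAt x (f.hasDerivAt x)).deriv

theorem integral_norm_sq_deriv_le_of_fourier_eq_zero {H : Type*} [NormedAddCommGroup H]
    [InnerProductSpace ℂ H] [CompleteSpace H] (f : 𝓢(ℝ, H)) {R : ℝ}
    (hf : ∀ ξ : ℝ, R < |ξ| → 𝓕 (f : ℝ → H) ξ = 0) :
    ∫ x, ‖deriv f x‖ ^ 2 ≤ (2 * π * R) ^ 2 * ∫ x, ‖f x‖ ^ 2 := by
  have hpoint : ∀ ξ : ℝ, ‖𝓕 (deriv f) ξ‖ ^ 2 ≤ (2 * π * R) ^ 2 * ‖𝓕 (f : ℝ → H) ξ‖ ^ 2 := by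
    intro ξ
    rcases le_or_gt |ξ| R with hξ | hξ
    · have hnorm : ‖(2 * π * I * ξ : ℂ)‖ = 2 * π * |ξ| := by simp [abs_of_pos pi_pos]
      rw [fourier_deriv_apply, norm_smul, hnorm, mul_pow]
      gcongr
    · simp [fourier_deriv_apply, hf ξ hξ]
  calc ∫ x, ‖deriv f x‖ ^ 2 = ∫ ξ, ‖𝓕 (derivCLM ℝ H f) ξ‖ ^ 2 := by
        rw [integral_norm_sq_fourier]; rfl
    _ ≤ ∫ ξ, (2 * π * R) ^ 2 * ‖𝓕 f ξ‖ ^ 2 := by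
      refine integral_mono ?_ ?_ hpoint
      · exact ((𝓕 (derivCLM ℝ H f)).memLp 2).integrable_norm_pow two_ne_zero
      · exact (((𝓕 f).memLp 2).integrable_norm_pow two_ne_zero).const_mul _
    _ = (2 * π * R) ^ 2 * ∫ x, ‖f x‖ ^ 2 := by
      rw [integral_const_mul, integral_norm_sq_fourier]

theorem integral_deriv_sq_le_of_fourier_ofReal_eq_zero (f : 𝓢(ℝ, ℝ)) {R : ℝ}
    (hf : ∀ ξ : ℝ, R < |ξ| → 𝓕 (fun x => (f x : ℂ)) ξ = 0) :
    ∫ x, deriv f x ^ 2 ≤ (2 * π * R) ^ 2 * ∫ x, f x ^ 2 := by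
  simpa [deriv_postcompCLM] using
    integral_norm_sq_deriv_le_of_fourier_eq_zero (f.postcompCLM ofRealCLM) hf

theorem fourier_deriv_ofReal_eq_zero (f : 𝓢(ℝ, ℝ)) {ξ : ℝ}
    (hf : 𝓕 (fun x => (f x : ℂ)) ξ = 0) :
    𝓕 (fun x => ((deriv f x : ℝ) : ℂ)) ξ = 0 := by
  have h := fourier_deriv_apply (f.postcompCLM ofRealCLM) ξ
  rw [deriv_postcompCLM] at h
  refine h.trans ?_
  rw [show 𝓕 ⇑(f.postcompCLM ofRealCLM) ξ = 0 from hf, smul_zero]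

end SchwartzMap

open SchwartzMap in
theorem bernstein_young_spectral_bound_general
    (v a : SchwartzMap ℝ ℝ) (R : ℝ)
    (hsupp : ∀ ξ : ℝ, R < |ξ| → 𝓕 (fun y => (v y : ℂ)) ξ = 0) :
    |∫ y : ℝ, deriv (deriv (fun z => v z)) y * deriv (fun z => a z) y|
      ≤ (1/2) * (∫ y : ℝ, (deriv (fun z => a z) y) ^ 2)
        + 2 * Real.pi ^ 2 * R ^ 2 * ∫ y : ℝ, (deriv (fun z => v z) y) ^ 2 := by
  have hbernstein := integral_deriv_sq_le_of_fourier_ofReal_eq_zero (derivCLM ℝ ℝ v)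
    fun ξ hξ => fourier_deriv_ofReal_eq_zero v (hsupp ξ hξ)
  have hyoung := abs_integral_mul_le_half_integral_sq_add
    ((derivCLM ℝ ℝ (derivCLM ℝ ℝ v)).memLp 2) ((derivCLM ℝ ℝ a).memLp 2)
  have hv' : ⇑(derivCLM ℝ ℝ v) = deriv v := rfl
  simp only [derivCLM_apply, hv'] at hbernstein hyoung
  change |∫ y, deriv (deriv v) y * deriv a y| ≤
    (1 / 2) * (∫ y, deriv a y ^ 2) + 2 * π ^ 2 * R ^ 2 * ∫ y, deriv v y ^ 2
  linarith

/-- Bernstein-type bound combined with Young's inequality for a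
spectrally localized Schwartz function v (Fourier support in {|ξ| ≤ R}):
|∫ v'' a'| ≤ (1/2)‖a'‖²_{L²} + 2π²R²‖v'‖²_{L²}. -/
theorem bernstein_young_spectral_bound
    (v a : SchwartzMap ℝ ℝ) (R : ℝ) (hR : 0 < R)
    (hsupp : ∀ ξ : ℝ, R < |ξ| → 𝓕 (fun y => (v y : ℂ)) ξ = 0) :
    |∫ y : ℝ, deriv (deriv (fun z => v z)) y * deriv (fun z => a z) y|
      ≤ (1/2) * (∫ y : ℝ, (deriv (fun z => a z) y) ^ 2)
        + 2 * Real.pi ^ 2 * R ^ 2 * ∫ y : ℝ, (deriv (fun z => v z) y) ^ 2 :=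
  bernstein_young_spectral_bound_general v a R hsupp
end

section
/- Let T > 0, λ ≥ 0, let f : [0,T] → ℝ be continuous and nonnegative with f² differentiable on [0,T], and let g : [0,T] → ℝ be continuous and nonnegative. Assume that for every t ∈ [0,T]: (1/2)(f²)'(t) + λ f(t)² ≤ g(t) f(t). Then f(T) + λ ∫₀ᵀ f(τ) dτ ≤ f(0) + ∫₀ᵀ g(τ) dτ. -/
/-! Where `f` vanishes, `f` itself need not be differentiable, so differentiate
`h = √(f² + ε²)` instead: `h' = (f²)' / (2h) ≤ (g f - λ f²) / h ≤ g - λ f + λ ε`,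
because `|f| ≤ h ≤ |f| + ε`. Integrating over `[0, T]` gives
`h(T) + λ ∫ f ≤ h(0) + ∫ g + λ ε T`; let `ε → 0`. -/

open Set Filter Topology MeasureTheory

lemma sqrt_sq_add_sq_le_abs_add {x ε : ℝ} (hε : 0 ≤ ε) : √(x ^ 2 + ε ^ 2) ≤ |x| + ε :=
  Real.sqrt_le_iff.2 ⟨by positivity, by nlinarith [sq_abs x, abs_nonneg x]⟩

lemma div_two_sqrt_sq_add_sq_le {d f g lam ε : ℝ} (hg : 0 ≤ g) (hlam : 0 ≤ lam) (hε : 0 < ε)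
    (hineq : (1 / 2) * d + lam * f ^ 2 ≤ g * f) :
    d / (2 * √(f ^ 2 + ε ^ 2)) ≤ g - lam * f + lam * ε := by
  set h := √(f ^ 2 + ε ^ 2)
  have h_pos : 0 < h := Real.sqrt_pos.2 (by positivity)
  have abs_le : |f| ≤ h := Real.abs_le_sqrt (by nlinarith)
  have le_abs_add : h ≤ |f| + ε := sqrt_sq_add_sq_le_abs_add hε.le
  rw [div_le_iff₀ (by positivity)]
  rcases le_total 0 f with hf | hf
  · rw [abs_of_nonneg hf] at abs_le le_abs_add
    nlinarith [mul_nonneg hg (sub_nonneg.2 abs_le), mul_nonneg (mul_nonneg hlam hf) hε.le,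
      mul_nonneg hlam (mul_nonneg hf (sub_nonneg.2 le_abs_add)),
      mul_nonneg hlam (mul_nonneg hε.le (sub_nonneg.2 abs_le))]
  · rw [abs_of_nonpos hf] at abs_le le_abs_add
    nlinarith [mul_nonneg hg (sub_nonneg.2 abs_le),
      mul_nonneg hlam (mul_nonneg (neg_nonneg.2 hf) h_pos.le),
      mul_nonneg hlam (mul_nonneg hε.le h_pos.le), mul_nonneg hlam (sq_nonneg f)]

variable {a b lam : ℝ} {f g d : ℝ → ℝ}

lemma abs_add_mul_integral_le_add_of_energy_ineq (hab : a ≤ b) (hlam : 0 ≤ lam)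
    (hfc : ContinuousOn f (Icc a b)) (hgi : IntegrableOn g (Icc a b))
    (hg0 : ∀ t ∈ Ioo a b, 0 ≤ g t) (hd : ∀ t ∈ Ioo a b, HasDerivAt (fun s => f s ^ 2) (d t) t)
    (hineq : ∀ t ∈ Ioo a b, (1 / 2) * d t + lam * f t ^ 2 ≤ g t * f t) {ε : ℝ} (hε : 0 < ε) :
    |f b| + lam * ∫ t in a..b, f t ≤ |f a| + (∫ t in a..b, g t) + ε * (1 + lam * (b - a)) := by
  have hfi : IntervalIntegrable f volume a b :=
    (intervalIntegrable_iff_integrableOn_Icc_of_le hab).2 hfc.integrableOn_Icc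
  have hgi' : IntervalIntegrable g volume a b :=
    (intervalIntegrable_iff_integrableOn_Icc_of_le hab).2 hgi
  have step := intervalIntegral.sub_le_integral_of_hasDeriv_right_of_le
    (g := fun t => √(f t ^ 2 + ε ^ 2)) (φ := fun t => g t - lam * f t + lam * ε) hab
    ((hfc.pow 2).add continuousOn_const).sqrt
    (fun t ht => (((hd t ht).add_const (ε ^ 2)).sqrt (by positivity)).hasDerivWithinAt)
    ((hgi.sub (hfc.integrableOn_Icc.const_mul lam)).add (integrableOn_const (by simp)))
    (fun t ht => div_two_sqrt_sq_add_sq_le (hg0 t ht) hlam hε (hineq t ht))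
  rw [intervalIntegral.integral_add (hgi'.sub (hfi.const_mul lam)) intervalIntegrable_const,
    intervalIntegral.integral_sub hgi' (hfi.const_mul lam), intervalIntegral.integral_const_mul,
    intervalIntegral.integral_const, smul_eq_mul] at step
  have hb : |f b| ≤ √(f b ^ 2 + ε ^ 2) := Real.abs_le_sqrt (by nlinarith)
  have ha := sqrt_sq_add_sq_le_abs_add (x := f a) hε.le
  linarith

theorem abs_add_mul_integral_le_of_energy_ineq (hab : a ≤ b) (hlam : 0 ≤ lam)
    (hfc : ContinuousOn f (Icc a b)) (hgi : IntegrableOn g (Icc a b))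
    (hg0 : ∀ t ∈ Ioo a b, 0 ≤ g t) (hd : ∀ t ∈ Ioo a b, HasDerivAt (fun s => f s ^ 2) (d t) t)
    (hineq : ∀ t ∈ Ioo a b, (1 / 2) * d t + lam * f t ^ 2 ≤ g t * f t) :
    |f b| + lam * ∫ t in a..b, f t ≤ |f a| + ∫ t in a..b, g t := by
  have hlim : Tendsto (fun ε => |f a| + (∫ t in a..b, g t) + ε * (1 + lam * (b - a)))
      (𝓝[>] 0) (𝓝 (|f a| + ∫ t in a..b, g t)) :=
    ((continuous_const.add (continuous_id.mul continuous_const)).tendsto' 0 _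
      (by simp)).mono_left nhdsWithin_le_nhds
  exact ge_of_tendsto hlim (eventually_nhdsWithin_of_forall fun ε hε =>
    abs_add_mul_integral_le_add_of_energy_ineq hab hlam hfc hgi hg0 hd hineq hε)

/-- integration of the differential inequality
(1/2)(f²)' + λf² ≤ g f for a continuous nonnegative f (which may vanish):
f(T) + λ∫₀ᵀ f ≤ f(0) + ∫₀ᵀ g. -/
theorem integrate_energy_inequality
    (T lam : ℝ) (hT : 0 < T) (hlam : 0 ≤ lam)
    (f g d : ℝ → ℝ)
    (hfc : ContinuousOn f (Set.Icc 0 T)) (hf0 : ∀ t ∈ Set.Icc (0:ℝ) T, 0 ≤ f t)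
    (hgc : ContinuousOn g (Set.Icc 0 T)) (hg0 : ∀ t ∈ Set.Icc (0:ℝ) T, 0 ≤ g t)
    (hd : ∀ t ∈ Set.Icc (0:ℝ) T,
      HasDerivWithinAt (fun s => f s ^ 2) (d t) (Set.Icc 0 T) t)
    (hineq : ∀ t ∈ Set.Icc (0:ℝ) T, (1/2) * d t + lam * f t ^ 2 ≤ g t * f t) :
    f T + lam * ∫ τ in (0:ℝ)..T, f τ ≤ f 0 + ∫ τ in (0:ℝ)..T, g τ := by
  have key := abs_add_mul_integral_le_of_energy_ineq hT.le hlam hfc hgc.integrableOn_Icc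
    (fun t ht => hg0 t (Ioo_subset_Icc_self ht))
    (fun t ht => (hd t (Ioo_subset_Icc_self ht)).hasDerivAt (Icc_mem_nhds ht.1 ht.2))
    (fun t ht => hineq t (Ioo_subset_Icc_self ht))
  rw [abs_of_nonneg (hf0 0 (left_mem_Icc.2 hT.le))] at key
  linarith [le_abs_self (f T)]
end

section
/- Let c > 0, C > 0, λ > 0, let h : [0,∞) → ℝ be continuous and nonnegative with h² differentiable, and let k : [0,∞) → ℝ be continuous and nonnegative. Assume that for all t ≥ 0: (1/2)(h²)'(t) + c λ² h(t)² ≤ C k(t) h(t). Then there exist constants c' > 0 and C' > 0 depending only on c and C such that for all t ≥ 0: sup_{τ∈[0,t]} ⟨τ⟩² λ³ h(τ)² + c' ∫₀ᵗ ⟨τ⟩² λ⁵ h(τ)² dτ ≤ C' ( λ³ h(0)² + ∫₀ᵗ ⟨τ⟩² λ k(τ)² dτ + ∫₀ᵗ λ h(τ)² dτ ), where ⟨τ⟩ := √(1+τ²). -/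
/-!
Multiply the differential inequality by `c λ² ⟨t⟩²`. By Young's inequality the forcing
term `C k h` costs half of the dissipation `c λ² h²`, and the derivative `2t` of the weight
costs the other half up to an unweighted `2 h²`; this is where `∫ λ h²` on the right comes
from. Integrating the resulting inequality for `c λ² ⟨t⟩² h²` over `[0, τ]` and over `[0, t]`
and multiplying by `λ / c` gives the estimate.
-/

open MeasureTheory Set intervalIntegral

theorem weighted_energy_deriv_le {a C x h k d : ℝ} (ha : 0 ≤ a)
    (hineq : 1 / 2 * d + a * h ^ 2 ≤ C * k * h) :
    a * (2 * x * h ^ 2 + (1 + x ^ 2) * d)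
      ≤ 2 * h ^ 2 + C ^ 2 * ((1 + x ^ 2) * k ^ 2) - a ^ 2 / 2 * ((1 + x ^ 2) * h ^ 2) := by
  have hweighted : a * ((1 + x ^ 2) * d) ≤ 2 * a * (1 + x ^ 2) * (C * k * h - a * h ^ 2) := by
    have : 0 ≤ a * (1 + x ^ 2) := by positivity
    nlinarith
  nlinarith [mul_nonneg (sq_nonneg (a * h - C * k)) (by positivity : (0:ℝ) ≤ 1 + x ^ 2),
    mul_nonneg (sq_nonneg (a * x - 2)) (sq_nonneg h)]

theorem weighted_energy_integral_le {a C t : ℝ} {h k d : ℝ → ℝ} (ha : 0 ≤ a)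
    (ht : 0 ≤ t)
    (hh : ContinuousOn h (Icc 0 t)) (hk : ContinuousOn k (Icc 0 t))
    (hd : ∀ x ∈ Ioo 0 t, HasDerivWithinAt (fun s => h s ^ 2) (d x) (Ioi x) x)
    (hineq : ∀ x ∈ Ioo 0 t, 1 / 2 * d x + a * h x ^ 2 ≤ C * k x * h x) :
    a * ((1 + t ^ 2) * h t ^ 2) + a ^ 2 / 2 * ∫ s in 0..t, (1 + s ^ 2) * h s ^ 2
      ≤ a * h 0 ^ 2 + C ^ 2 * (∫ s in 0..t, (1 + s ^ 2) * k s ^ 2)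
        + 2 * ∫ s in 0..t, h s ^ 2 := by
  have hint : ∀ f : ℝ → ℝ, ContinuousOn f (Icc 0 t) → IntervalIntegrable f volume 0 t :=
    fun f hf => hf.intervalIntegrable_of_Icc ht
  have hE : ContinuousOn (fun s => h s ^ 2) (Icc 0 t) := hh.pow 2
  have hWh : ContinuousOn (fun s => (1 + s ^ 2) * h s ^ 2) (Icc 0 t) := by fun_prop
  have hWk : ContinuousOn (fun s => (1 + s ^ 2) * k s ^ 2) (Icc 0 t) := by fun_prop
  have hderiv : ∀ x ∈ Ioo 0 t, HasDerivWithinAt (fun s => a * ((1 + s ^ 2) * h s ^ 2))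
      (a * (2 * x * h x ^ 2 + (1 + x ^ 2) * d x)) (Ioi x) x := by
    intro x hx
    have hw : HasDerivAt (fun s : ℝ => 1 + s ^ 2) (2 * x) x := by
      simpa using (hasDerivAt_pow 2 x).const_add 1
    exact (hw.hasDerivWithinAt.mul (hd x hx)).const_mul a
  have hφ : ContinuousOn (fun s => 2 * h s ^ 2 + C ^ 2 * ((1 + s ^ 2) * k s ^ 2)
      - a ^ 2 / 2 * ((1 + s ^ 2) * h s ^ 2)) (Icc 0 t) := by fun_prop
  have key := sub_le_integral_of_hasDeriv_right_of_le ht (by fun_prop) hderiv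
    hφ.integrableOn_Icc (fun x hx => weighted_energy_deriv_le ha (hineq x hx))
  rw [integral_sub (((hint _ hE).const_mul 2).add ((hint _ hWk).const_mul _))
      ((hint _ hWh).const_mul _), integral_add ((hint _ hE).const_mul 2)
      ((hint _ hWk).const_mul _)] at key
  simp only [intervalIntegral.integral_const_mul, ne_eq, OfNat.ofNat_ne_zero, not_false_eq_true,
    zero_pow, add_zero, one_mul] at key
  linarith

theorem weighted_energy_sup_add_integral_le {a C t τ : ℝ} {h k d : ℝ → ℝ} (ha : 0 ≤ a)
    (hτ : τ ∈ Icc 0 t) (hh : ContinuousOn h (Icc 0 t)) (hk : ContinuousOn k (Icc 0 t))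
    (hd : ∀ x ∈ Ioo 0 t, HasDerivWithinAt (fun s => h s ^ 2) (d x) (Ioi x) x)
    (hineq : ∀ x ∈ Ioo 0 t, 1 / 2 * d x + a * h x ^ 2 ≤ C * k x * h x) :
    a * ((1 + τ ^ 2) * h τ ^ 2) + a ^ 2 / 2 * ∫ s in 0..t, (1 + s ^ 2) * h s ^ 2
      ≤ 2 * (a * h 0 ^ 2 + C ^ 2 * (∫ s in 0..t, (1 + s ^ 2) * k s ^ 2)
        + 2 * ∫ s in 0..t, h s ^ 2) := by
  obtain ⟨hτ0, hτt⟩ := hτ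
  have hsub : Icc 0 τ ⊆ Icc 0 t := Icc_subset_Icc_right hτt
  have at_τ := weighted_energy_integral_le ha hτ0 (hh.mono hsub) (hk.mono hsub)
    (fun x hx => hd x ⟨hx.1, hx.2.trans_le hτt⟩)
    (fun x hx => hineq x ⟨hx.1, hx.2.trans_le hτt⟩)
  have at_t := weighted_energy_integral_le ha (hτ0.trans hτt) hh hk hd hineq
  have integral_le : ∀ f : ℝ → ℝ, ContinuousOn f (Icc 0 t) → (∀ s, 0 ≤ f s) →
      (∫ s in 0..τ, f s) ≤ ∫ s in 0..t, f s := fun f hf hf0 =>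
    integral_mono_interval le_rfl hτ0 hτt (Filter.Eventually.of_forall hf0)
      (hf.intervalIntegrable_of_Icc (hτ0.trans hτt))
  have hk_le := integral_le (fun s => (1 + s ^ 2) * k s ^ 2) (by fun_prop)
    (fun s => by positivity)
  have hh_le := integral_le (fun s => h s ^ 2) (hh.pow 2) (fun s => by positivity)
  have hhτ : 0 ≤ a ^ 2 / 2 * ∫ s in 0..τ, (1 + s ^ 2) * h s ^ 2 :=
    mul_nonneg (by positivity) (integral_nonneg hτ0 (fun s _ => by positivity))
  have hht : 0 ≤ a * ((1 + t ^ 2) * h t ^ 2) := by positivity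
  linarith [mul_le_mul_of_nonneg_left hk_le (sq_nonneg C)]

theorem weighted_energy_decay_inequality_general
    (c C : ℝ) (hc : 0 < c) :
    ∃ c' C' : ℝ, 0 < c' ∧ 0 < C' ∧
      ∀ (lam : ℝ) (h k d : ℝ → ℝ), 0 < lam →
        ContinuousOn h (Set.Ici 0) → (∀ t : ℝ, 0 ≤ t → 0 ≤ h t) →
        ContinuousOn k (Set.Ici 0) → (∀ t : ℝ, 0 ≤ t → 0 ≤ k t) →
        (∀ t : ℝ, 0 ≤ t →
          HasDerivWithinAt (fun s => h s ^ 2) (d t) (Set.Ici 0) t) →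
        (∀ t : ℝ, 0 ≤ t → (1/2) * d t + c * lam ^ 2 * h t ^ 2 ≤ C * k t * h t) →
        ∀ t : ℝ, 0 ≤ t → ∀ τ ∈ Set.Icc (0:ℝ) t,
          Real.sqrt (1 + τ ^ 2) ^ 2 * lam ^ 3 * h τ ^ 2
            + c' * ∫ s in (0:ℝ)..t, Real.sqrt (1 + s ^ 2) ^ 2 * lam ^ 5 * h s ^ 2
          ≤ C' * (lam ^ 3 * h 0 ^ 2
            + (∫ s in (0:ℝ)..t, Real.sqrt (1 + s ^ 2) ^ 2 * lam * k s ^ 2)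
            + ∫ s in (0:ℝ)..t, lam * h s ^ 2) := by
  refine ⟨c / 2, 2 * (1 + C ^ 2 / c + 2 / c), by positivity, by positivity, ?_⟩
  intro lam h k d hlam hh _ hk _ hd hineq t ht τ hτ
  have key := weighted_energy_sup_add_integral_le (a := c * lam ^ 2) (by positivity) hτ
    (hh.mono Icc_subset_Ici_self) (hk.mono Icc_subset_Ici_self)
    (fun x hx => (hd x hx.1.le).mono (Ioi_subset_Ici hx.1.le))
    (fun x hx => hineq x hx.1.le)
  have hsq : ∀ s : ℝ, √(1 + s ^ 2) ^ 2 = 1 + s ^ 2 := fun s => Real.sq_sqrt (by positivity)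
  simp only [hsq, mul_right_comm _ lam, mul_right_comm _ (lam ^ 5),
    intervalIntegral.integral_mul_const, intervalIntegral.integral_const_mul]
  set Ih := ∫ s in 0..t, (1 + s ^ 2) * h s ^ 2
  set Ik := ∫ s in 0..t, (1 + s ^ 2) * k s ^ 2
  set I := ∫ s in 0..t, h s ^ 2
  have hIk : 0 ≤ lam * Ik := mul_nonneg hlam.le (integral_nonneg ht fun s _ => by positivity)
  have hI : 0 ≤ lam * I := mul_nonneg hlam.le (integral_nonneg ht fun s _ => by positivity)
  have h0 : 0 ≤ lam ^ 3 * h 0 ^ 2 := by positivity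
  calc (1 + τ ^ 2) * lam ^ 3 * h τ ^ 2 + c / 2 * (Ih * lam ^ 5)
      = lam / c * (c * lam ^ 2 * ((1 + τ ^ 2) * h τ ^ 2) + (c * lam ^ 2) ^ 2 / 2 * Ih) := by
        field_simp
    _ ≤ lam / c * (2 * ((c * lam ^ 2 * h 0 ^ 2 + C ^ 2 * Ik) + 2 * I)) := by gcongr
    _ = 2 * (lam ^ 3 * h 0 ^ 2 + C ^ 2 / c * (lam * Ik) + 2 / c * (lam * I)) := by
        field_simp
    _ ≤ 2 * (1 + C ^ 2 / c + 2 / c) * (lam ^ 3 * h 0 ^ 2 + Ik * lam + lam * I) := by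
        have hCc : 0 ≤ C ^ 2 / c := by positivity
        have h2c : 0 ≤ 2 / c := by positivity
        nlinarith [mul_nonneg hCc hIk, mul_nonneg h2c h0, mul_nonneg hCc h0, mul_nonneg h2c hI]

/-- weighted-in-time version of the localized low-frequency
energy inequality.  From (1/2)(h²)' + cλ²h² ≤ C k h one deduces, with
constants c', C' depending only on c and C,
sup_{τ∈[0,t]} ⟨τ⟩²λ³h(τ)² + c'∫₀ᵗ ⟨τ⟩²λ⁵h² ≤ C'(λ³h(0)² + ∫₀ᵗ⟨τ⟩²λk² + ∫₀ᵗλh²),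
where ⟨τ⟩ = √(1+τ²).  (The supremum bound is expressed as a bound valid for
every τ ∈ [0,t].) -/
theorem weighted_energy_decay_inequality
    (c C : ℝ) (hc : 0 < c) (hC : 0 < C) :
    ∃ c' C' : ℝ, 0 < c' ∧ 0 < C' ∧
      ∀ (lam : ℝ) (h k d : ℝ → ℝ), 0 < lam →
        ContinuousOn h (Set.Ici 0) → (∀ t : ℝ, 0 ≤ t → 0 ≤ h t) →
        ContinuousOn k (Set.Ici 0) → (∀ t : ℝ, 0 ≤ t → 0 ≤ k t) →
        (∀ t : ℝ, 0 ≤ t →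
          HasDerivWithinAt (fun s => h s ^ 2) (d t) (Set.Ici 0) t) →
        (∀ t : ℝ, 0 ≤ t → (1/2) * d t + c * lam ^ 2 * h t ^ 2 ≤ C * k t * h t) →
        ∀ t : ℝ, 0 ≤ t → ∀ τ ∈ Set.Icc (0:ℝ) t,
          Real.sqrt (1 + τ ^ 2) ^ 2 * lam ^ 3 * h τ ^ 2
            + c' * ∫ s in (0:ℝ)..t, Real.sqrt (1 + s ^ 2) ^ 2 * lam ^ 5 * h s ^ 2
          ≤ C' * (lam ^ 3 * h 0 ^ 2
            + (∫ s in (0:ℝ)..t, Real.sqrt (1 + s ^ 2) ^ 2 * lam * k s ^ 2)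
            + ∫ s in (0:ℝ)..t, lam * h s ^ 2) :=
  weighted_energy_decay_inequality_general c C hc
end

section
/- Let Q, ν : ℝ → ℝ be smooth with ν everywhere nonzero, and let ν̄ > 0. Suppose η̌, v̌ : ℝ × ℝ → ℝ are three times continuously differentiable and satisfy at every point ∂_t η̌ − ∂_y v̌ = 0 and ν̄⁻² ∂_t v̌ + ∂_y(Q(η̌)) − ν̄⁻¹ ∂_y(ν(η̌) ∂_y v̌) = 0. Define ν̃(s) := ν̄⁻¹ ν(s) and W(t,y) := ∂_y v̌(t,y) − (Q/ν̃)(η̌(t,y)). Then at every point (t,y): ∂_t W − ν̄² ∂_y²( ν̃(η̌) W ) = −(Q/ν̃)'(η̌) ∂_y v̌. -/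
/-!
The momentum equation says that `ν̃(η̌) W = ν̄⁻¹ ν(η̌) v̌_y − Q(η̌)` has `y`-derivative `ν̄⁻² v̌_t`,
so `ν̄² (ν̃(η̌) W)_yy = v̌_ty`. On the other hand `W_t = v̌_yt − (Q/ν̃)'(η̌) η̌_t`, and `η̌_t = v̌_y`
by the mass equation. The mixed partials `v̌_ty` and `v̌_yt` agree, which leaves the source term.
-/

section PartialDerivatives

variable {E : Type*} [NormedAddCommGroup E] [NormedSpace ℝ E] {f : ℝ × ℝ → E}

theorem DifferentiableAt.hasDerivAt_partial_fst {a b : ℝ} (hf : DifferentiableAt ℝ f (a, b)) :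
    HasDerivAt (fun s => f (s, b)) (fderiv ℝ f (a, b) (1, 0)) a :=
  hf.hasFDerivAt.comp_hasDerivAt a ((hasDerivAt_id a).prodMk (hasDerivAt_const a b))

theorem DifferentiableAt.hasDerivAt_partial_snd {a b : ℝ} (hf : DifferentiableAt ℝ f (a, b)) :
    HasDerivAt (fun z => f (a, z)) (fderiv ℝ f (a, b) (0, 1)) b :=
  hf.hasFDerivAt.comp_hasDerivAt b ((hasDerivAt_const b a).prodMk (hasDerivAt_id b))

theorem contDiff_partial_snd {m n : WithTop ℕ∞} (hf : ContDiff ℝ n f) (hmn : m + 1 ≤ n) :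
    ContDiff ℝ m fun p : ℝ × ℝ => deriv (fun z => f (p.1, z)) p.2 := by
  have hf1 : Differentiable ℝ f := hf.differentiable (by rintro rfl; simp at hmn)
  have h : (fun p : ℝ × ℝ => deriv (fun z => f (p.1, z)) p.2) = fun p => fderiv ℝ f p (0, 1) :=
    funext fun p => (hf1 p).hasDerivAt_partial_snd.deriv
  rw [h]
  exact (hf.fderiv_right hmn).clm_apply contDiff_const

theorem deriv_partial_comm (hf : ContDiff ℝ 2 f) (t y : ℝ) :
    deriv (fun s => deriv (fun z => f (s, z)) y) t
      = deriv (fun z => deriv (fun s => f (s, z)) t) y := by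
  have hf1 : Differentiable ℝ f := hf.differentiable (by norm_num)
  have hf' : Differentiable ℝ (fderiv ℝ f) :=
    (hf.fderiv_right (m := 1) le_rfl).differentiable one_ne_zero
  simp only [fun s z => (hf1 (s, z)).hasDerivAt_partial_snd.deriv,
    fun s z => (hf1 (s, z)).hasDerivAt_partial_fst.deriv]
  rw [((hf' (t, y)).hasDerivAt_partial_fst.clm_apply (hasDerivAt_const t _)).deriv,
    ((hf' (t, y)).hasDerivAt_partial_snd.clm_apply (hasDerivAt_const y _)).deriv]
  simpa using hf.contDiffAt.isSymmSndFDerivAt (by simp) (1, 0) (0, 1)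

end PartialDerivatives

theorem deriv_viscous_flux {Q ν η u : ℝ → ℝ} {c : ℝ} (hc : c ≠ 0) (hν0 : ∀ s, ν s ≠ 0)
    (hQ : Differentiable ℝ Q) (hν : Differentiable ℝ ν) (hη : Differentiable ℝ η)
    (hu : Differentiable ℝ u) (z : ℝ) :
    deriv (fun w => c * ν (η w) * (u w - Q (η w) / (c * ν (η w)))) z
      = c * deriv (fun w => ν (η w) * u w) z - deriv (fun w => Q (η w)) z := by
  have hflux : (fun w => c * ν (η w) * (u w - Q (η w) / (c * ν (η w))))
      = fun w => c * (ν (η w) * u w) - Q (η w) := by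
    funext w
    rw [mul_sub, mul_div_cancel₀ _ (mul_ne_zero hc (hν0 _)), mul_assoc]
  rw [hflux, deriv_fun_sub (by fun_prop) (by fun_prop), deriv_const_mul _ (by fun_prop)]

/-- for the diffusively rescaled Lagrangian system, the quantity
W = v̌_y − (Q/ν̃)(η̌) (with ν̃ = ν̄⁻¹ν) satisfies the parabolic equation
W_t − ν̄²(ν̃(η̌)W)_yy = −(Q/ν̃)'(η̌) v̌_y. -/
theorem diffusive_effective_flux_equation
    (Q ν : ℝ → ℝ) (hQ : ContDiff ℝ (⊤ : ℕ∞) Q) (hν : ContDiff ℝ (⊤ : ℕ∞) ν)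
    (hν0 : ∀ s : ℝ, ν s ≠ 0) (nubar : ℝ) (hnubar : 0 < nubar)
    (η v : ℝ × ℝ → ℝ) (hη : ContDiff ℝ 3 η) (hv : ContDiff ℝ 3 v)
    (heq1 : ∀ t y : ℝ,
      deriv (fun s => η (s, y)) t - deriv (fun z => v (t, z)) y = 0)
    (heq2 : ∀ t y : ℝ,
      (nubar ^ 2)⁻¹ * deriv (fun s => v (s, y)) t
        + deriv (fun z => Q (η (t, z))) y
        - nubar⁻¹ * deriv (fun z => ν (η (t, z)) * deriv (fun w => v (t, w)) z) y
      = 0)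
    (W : ℝ × ℝ → ℝ)
    (hW : ∀ t y : ℝ, W (t, y) = deriv (fun z => v (t, z)) y
      - Q (η (t, y)) / (nubar⁻¹ * ν (η (t, y)))) :
    ∀ t y : ℝ,
      deriv (fun s => W (s, y)) t
        - nubar ^ 2
          * deriv (fun z => deriv (fun w => nubar⁻¹ * ν (η (t, w)) * W (t, w)) z) y
      = -(deriv (fun s => Q s / (nubar⁻¹ * ν s)) (η (t, y)))
          * deriv (fun z => v (t, z)) y := by
  intro t y
  have hQ' : Differentiable ℝ Q := hQ.differentiable (by simp)
  have hν' : Differentiable ℝ ν := hν.differentiable (by simp)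
  have hη' : Differentiable ℝ η := hη.differentiable (by simp)
  have hvy : Differentiable ℝ fun p : ℝ × ℝ => deriv (fun z => v (p.1, z)) p.2 :=
    (contDiff_partial_snd hv (m := 2) (by norm_num)).differentiable (by simp)
  have hc : nubar⁻¹ ≠ 0 := inv_ne_zero hnubar.ne'
  have hG : Differentiable ℝ fun s => Q s / (nubar⁻¹ * ν s) :=
    fun s => (hQ' s).div ((hν' s).const_mul _) (mul_ne_zero hc (hν0 s))
  have hη_t : HasDerivAt (fun s => η (s, y)) (deriv (fun z => v (t, z)) y) t := by
    rw [← sub_eq_zero.mp (heq1 t y)]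
    exact (hη'.comp (differentiable_id.prodMk (differentiable_const y)) t).hasDerivAt
  have hW_t : deriv (fun s => W (s, y)) t
      = deriv (fun s => deriv (fun z => v (s, z)) y) t
        - deriv (fun s => Q s / (nubar⁻¹ * ν s)) (η (t, y)) * deriv (fun z => v (t, z)) y := by
    simp only [hW]
    exact ((hvy.comp (differentiable_id.prodMk (differentiable_const y)) t).hasDerivAt.sub
      ((hG _).hasDerivAt.comp t hη_t)).deriv
  have hflux_y : ∀ z, deriv (fun w => nubar⁻¹ * ν (η (t, w)) * W (t, w)) z
      = (nubar ^ 2)⁻¹ * deriv (fun s => v (s, z)) t := by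
    intro z
    simp only [hW]
    rw [deriv_viscous_flux (η := fun w => η (t, w)) (u := fun w => deriv (fun z => v (t, z)) w)
      hc hν0 hQ' hν' (by fun_prop) (hvy.comp ((differentiable_const t).prodMk differentiable_id))]
    linarith [heq2 t z]
  rw [hW_t, funext hflux_y, deriv_const_mul_field, ← deriv_partial_comm (hv.of_le (by norm_num))]
  rw [mul_inv_cancel_left₀ (pow_ne_zero 2 hnubar.ne')]
  ring
end
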